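/- The lifted Levi-Civita map L : (ℂ\{0}) × ℂ → (ℂ\{0}) × ℂ, L(z,w) = (z²/2, w/z̄), is a symplectic two-to-one covering: at every point (z,w) with z ≠ 0, the (real) derivative DL(z,w) : ℝ⁴ → ℝ⁴ preserves the standard symplectic bilinear form ω₀((a,b),(a',b')) := ⟨b, a'⟩ - ⟨b', a⟩ on ℝ² × ℝ² ≅ ℂ × ℂ; moreover every point of (ℂ\{0}) × ℂ has exactly two preimages under L. -/

import Mathlib

/-!
Writing `ω₀(v, v') = Re(conj v.2 * v'.1 - conj v'.2 * v.1)`, the derivative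
`DL(z,w)(a,b) = (z a, b / z̄ - w ā / z̄²)` turns `conj b' * a` into `conj b' * a - w̄ a a' / z`;
the extra term is symmetric in `a, a'` and cancels in `ω₀`.
The preimages of `(y₁, y₂)` are `(s, y₂ s̄)` for the two square roots `s` of `2 y₁`.
-/

/-- The lifted Levi-Civita map `L(z,w) = (z²/2, w/z̄)` on `(ℂ \ {0}) × ℂ`. -/
noncomputable def leviCivita (zw : ℂ × ℂ) : ℂ × ℂ :=
  (zw.1 ^ 2 / 2, zw.2 / (starRingEnd ℂ zw.1))

/-- The Euclidean inner product on `ℝ² ≅ ℂ`. -/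
def eip (a b : ℂ) : ℝ := a.re * b.re + a.im * b.im

/-- The standard symplectic bilinear form `ω₀((a,b),(a',b')) = ⟨b,a'⟩ - ⟨b',a⟩`
on `ℝ² × ℝ² ≅ ℂ × ℂ`. -/
def omega0 (v v' : ℂ × ℂ) : ℝ := eip v.2 v'.1 - eip v'.2 v.1

open ComplexConjugate

lemma eip_eq_re_conj_mul (a b : ℂ) : eip a b = (conj a * b).re := by
  simp [eip, Complex.mul_re]

lemma omega0_eq_re (v v' : ℂ × ℂ) : omega0 v v' = (conj v.2 * v'.1 - conj v'.2 * v.1).re := by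
  rw [omega0, eip_eq_re_conj_mul, eip_eq_re_conj_mul, Complex.sub_re]

theorem fderiv_leviCivita_apply {z : ℂ} (hz : z ≠ 0) (w : ℂ) (v : ℂ × ℂ) :
    fderiv ℝ leviCivita (z, w) v = (z * v.1, v.2 / conj z - w * conj v.1 / conj z ^ 2) := by
  have hfst : HasFDerivAt (fun p : ℂ × ℂ => p.1) (ContinuousLinearMap.fst ℝ ℂ ℂ) (z, w) :=
    hasFDerivAt_fst
  have hsq := (hfst.pow 2).mul_const (2⁻¹ : ℂ)
  have hinv := (hasFDerivAt_inv' (star_ne_zero.2 hz)).comp (z, w) hfst.star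
  have hL : HasFDerivAt leviCivita _ (z, w) := hsq.prodMk (hasFDerivAt_snd.mul hinv)
  rw [hL.fderiv]
  simp only [Nat.add_one_sub_one, pow_one, nsmul_eq_mul, Nat.cast_ofNat, RCLike.star_def,
    ContinuousLinearMap.neg_comp, smul_neg, ContinuousLinearMap.prod_apply,
    smul_apply, ContinuousLinearMap.coe_fst', smul_eq_mul,
    add_apply, neg_apply, ContinuousLinearMap.comp_apply,
    ContinuousLinearEquiv.coe_coe, starL'_apply, ContinuousLinearMap.mulLeftRight_apply,
    ContinuousLinearMap.coe_snd', Prod.mk.injEq]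
  constructor <;> field_simp
  ring

theorem omega0_fderiv_leviCivita {z : ℂ} (hz : z ≠ 0) (w : ℂ) (v v' : ℂ × ℂ) :
    omega0 (fderiv ℝ leviCivita (z, w) v) (fderiv ℝ leviCivita (z, w) v') = omega0 v v' := by
  rw [fderiv_leviCivita_apply hz, fderiv_leviCivita_apply hz, omega0_eq_re, omega0_eq_re]
  congr 1
  simp only [map_sub, map_mul, map_div₀, map_pow, Complex.conj_conj]
  field_simp
  ring

lemma leviCivita_eq_iff {x : ℂ × ℂ} (hx : x.1 ≠ 0) (y : ℂ × ℂ) :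
    leviCivita x = y ↔ x.1 ^ 2 = 2 * y.1 ∧ x.2 = y.2 * conj x.1 := by
  have hcx : conj x.1 ≠ 0 := (map_ne_zero _).2 hx
  rw [leviCivita, Prod.ext_iff, div_eq_iff two_ne_zero, div_eq_iff hcx, mul_comm y.1]

lemma leviCivita_preimage_eq_image (y : ℂ × ℂ) (hy : y.1 ≠ 0) :
    {x : ℂ × ℂ | x.1 ≠ 0 ∧ leviCivita x = y} =
      (fun s => (s, y.2 * conj s)) '' {s | s ^ 2 = 2 * y.1} := by
  ext x
  simp only [Set.mem_ofPred_eq, Set.mem_image]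
  constructor
  · rintro ⟨hx, hLx⟩
    obtain ⟨hsq, hx₂⟩ := (leviCivita_eq_iff hx y).1 hLx
    exact ⟨x.1, hsq, by rw [← hx₂]⟩
  · rintro ⟨s, hs, rfl⟩
    have hs₀ : s ≠ 0 := ne_zero_pow two_ne_zero (hs ▸ mul_ne_zero two_ne_zero hy)
    exact ⟨hs₀, (leviCivita_eq_iff hs₀ y).2 ⟨hs, rfl⟩⟩

lemma encard_setOf_sq_eq_sq {K : Type*} [Field K] [CharZero K] {r : K} (hr : r ≠ 0) :
    {s : K | s ^ 2 = r ^ 2}.encard = 2 := by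
  have hroots : {s : K | s ^ 2 = r ^ 2} = {r, -r} := by
    ext s
    simp [sq_eq_sq_iff_eq_or_eq_neg]
  rw [hroots, Set.encard_pair (self_ne_neg.2 hr)]

/-- The lifted Levi-Civita map is a symplectic two-to-one covering: at every point `(z,w)`
with `z ≠ 0` its derivative preserves the standard symplectic bilinear form `ω₀`, and every
point of `(ℂ \ {0}) × ℂ` has exactly two preimages. -/
theorem leviCivita_symplectic_two_to_one :
    (∀ (z : ℂ), z ≠ 0 → ∀ (w : ℂ) (v v' : ℂ × ℂ),
      omega0 (fderiv ℝ leviCivita (z, w) v) (fderiv ℝ leviCivita (z, w) v') = omega0 v v') ∧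
    (∀ y : ℂ × ℂ, y.1 ≠ 0 →
      ({x : ℂ × ℂ | x.1 ≠ 0 ∧ leviCivita x = y}).encard = 2) := by
  refine ⟨fun z hz w => omega0_fderiv_leviCivita hz w, fun y hy => ?_⟩
  obtain ⟨r, hr⟩ := IsAlgClosed.exists_pow_nat_eq (2 * y.1) two_pos
  have hr₀ : r ≠ 0 := ne_zero_pow two_ne_zero (hr ▸ mul_ne_zero two_ne_zero hy)
  have hgraph : Function.Injective fun s : ℂ => (s, y.2 * conj s) :=
    fun _ _ h => congrArg Prod.fst h
  rw [leviCivita_preimage_eq_image y hy, hgraph.encard_image, ← hr, encard_setOf_sq_eq_sq hr₀]
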